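/- arXiv:1508.04390 — 2 statements merged into one kernel-verified Lean document; each statement's English description precedes it below -/
import Mathlib

section
/- There is an absolute constant c > 0 such that in the herald-protocol round model, for every vertex u, every integer k ≥ 1, every channel i ∈ {1,…,n_A}, and every subset S ⊆ N^k(u), the following holds, where ∂S := { s ∈ S : s has a neighbor in N^k(u) \ S }: conditioned on the event that no vertex of ∂S operates on channel i (an event of positive probability), the probability that some vertex of N^k(u) \ S receives a message on channel i is at most c · π_ℓ · α(G[N^k(u)]). -/
open Finset

/-- The action a vertex takes in one round: `none` is idle, `some (i, false)` is listening on
channel `i+1`, and `some (i, true)` is broadcasting on channel `i+1` (channels are numbered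
`1, …, nA`). -/
abbrev Act (nA : ℕ) := Option (Fin nA × Bool)

/-- The probability of each action in the herald-protocol round model, for a vertex with
activity `g` and listening probability `p`: on channel `i+1` the vertex listens with
probability `p·g·2^{-(i+1)}` and broadcasts with probability `(1−p)·g·2^{-(i+1)}`; with the
remaining probability it is idle. -/
noncomputable def actProb (nA : ℕ) (p g : ℝ) : Act nA → ℝ
  | some (i, false) => p * g * (2 : ℝ) ^ (-((i.1 : ℤ) + 1))
  | some (i, true) => (1 - p) * g * (2 : ℝ) ^ (-((i.1 : ℤ) + 1))
  | none => 1 - ∑ i : Fin nA, g * (2 : ℝ) ^ (-((i.1 : ℤ) + 1))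

open Classical in
/-- The probability of an event `E` in one round of the herald-protocol round model, where all
vertices choose their actions independently. -/
noncomputable def roundPr {V : Type*} [Fintype V] [DecidableEq V] (nA : ℕ) (p : ℝ)
    (γ : V → ℝ) (E : (V → Act nA) → Prop) : ℝ :=
  ∑ f : V → Act nA, if E f then ∏ v, actProb nA p (γ v) (f v) else 0

/-- `v` listens on channel `i` (i.e. channel number `i+1`). -/
def listens {V : Type*} {nA : ℕ} (f : V → Act nA) (v : V) (i : Fin nA) : Prop :=
  f v = some (i, false)

/-- `v` broadcasts on channel `i` (i.e. channel number `i+1`). -/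
def broadcasts {V : Type*} {nA : ℕ} (f : V → Act nA) (v : V) (i : Fin nA) : Prop :=
  f v = some (i, true)

/-- `v` operates (listens or broadcasts) on channel `i`. -/
def operates {V : Type*} {nA : ℕ} (f : V → Act nA) (v : V) (i : Fin nA) : Prop :=
  listens f v i ∨ broadcasts f v i

open Classical in
/-- `v` receives a message on channel `i`: it listens on channel `i` and exactly one of its
neighbors broadcasts on channel `i`. -/
def receivesOn {V : Type*} [Fintype V] [DecidableEq V] (G : SimpleGraph V)
    [DecidableRel G.Adj] {nA : ℕ} (f : V → Act nA) (v : V) (i : Fin nA) : Prop :=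
  listens f v i ∧ ((G.neighborFinset v).filter fun w => broadcasts f w i).card = 1

/-- `v` receives a message (on some channel). -/
def receives {V : Type*} [Fintype V] [DecidableEq V] (G : SimpleGraph V)
    [DecidableRel G.Adj] {nA : ℕ} (f : V → Act nA) (v : V) : Prop :=
  ∃ i : Fin nA, receivesOn G f v i

/-- `ball G u k` is the set `N^k(u)` of vertices at distance at most `k` from `u` in `G`
(including `u` itself). -/
def ball {V : Type*} (G : SimpleGraph V) (u : V) (k : ℕ) : Set V :=
  {v | ∃ p : G.Walk u v, p.length ≤ k}

/-- The independence number of the subgraph of `G` induced by a vertex set `S`. -/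
noncomputable def indepNumOn {V : Type*} [Fintype V] (G : SimpleGraph V) (S : Set V) : ℕ :=
  sSup {n | ∃ s : Finset V, ↑s ⊆ S ∧ (∀ a ∈ s, ∀ b ∈ s, a ≠ b → ¬ G.Adj a b) ∧ s.card = n}

/-- `Γ(x) = ∑_{y ∈ N(x) ∪ {x}} γ(y)`. -/
noncomputable def Gam {V : Type*} [Fintype V] [DecidableEq V] (G : SimpleGraph V)
    [DecidableRel G.Adj] (γ : V → ℝ) (x : V) : ℝ :=
  ∑ y ∈ insert x (G.neighborFinset x), γ y

/-- `Γ°(x) = ∑_{y ∈ N(x)} γ(y)`. -/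
noncomputable def GamO {V : Type*} [Fintype V] [DecidableEq V] (G : SimpleGraph V)
    [DecidableRel G.Adj] (γ : V → ℝ) (x : V) : ℝ :=
  ∑ y ∈ G.neighborFinset x, γ y

lemma geom_aux (n : ℕ) : ∑ j ∈ Finset.range n, ((1:ℝ)/2)^(j+1) = 1 - (1/2)^n := by
  induction n with
  | zero => simp
  | succ n ih => rw [Finset.sum_range_succ, ih]; ring

lemma q_eq {nA : ℕ} (i : Fin nA) : (2:ℝ)^(-((i.1:ℤ)+1)) = ((1:ℝ)/2)^(i.1+1) := by
  rw [one_div, inv_pow, ← zpow_natCast (2:ℝ) (i.1+1), ← zpow_neg]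
  push_cast
  ring_nf

lemma sum_q_le (nA : ℕ) : ∑ i : Fin nA, (2:ℝ)^(-((i.1:ℤ)+1)) ≤ 1 := by
  calc ∑ i : Fin nA, (2:ℝ)^(-((i.1:ℤ)+1)) = ∑ j ∈ Finset.range nA, ((1:ℝ)/2)^(j+1) := by
        rw [Finset.sum_range fun j => ((1:ℝ)/2)^(j+1)]
        exact Finset.sum_congr rfl fun i _ => q_eq i
    _ = 1 - (1/2)^nA := geom_aux nA
    _ ≤ 1 := by
        have : (0:ℝ) ≤ (1/2)^nA := by positivity
        linarith


-- combinatorial half-independence lemma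
lemma exists_indep_half {V : Type} [DecidableEq V] (G : SimpleGraph V) [DecidableRel G.Adj]
    (X : Finset V) (h : ∀ x ∈ X, (X.filter (fun y => G.Adj x y)).card ≤ 1) :
    ∃ s : Finset V, s ⊆ X ∧ (∀ a ∈ s, ∀ b ∈ s, a ≠ b → ¬ G.Adj a b) ∧ X.card ≤ 2 * s.card := by
  induction X using Finset.strongInduction with
  | _ X ih =>
    rcases X.eq_empty_or_nonempty with rfl | ⟨x, hx⟩
    · exact ⟨∅, by simp, by simp, by simp⟩
    · set R : Finset V := insert x (X.filter (fun y => G.Adj x y)) with hR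
      set Y : Finset V := X \ R with hYdef
      have hxR : x ∈ R := mem_insert_self _ _
      have hxY : x ∉ Y := by simp [hYdef, hxR]
      have hYX : Y ⊂ X := by
        refine Finset.ssubset_iff_of_subset (sdiff_subset) |>.2 ⟨x, hx, hxY⟩
      obtain ⟨s, hsY, hind, hcard⟩ := ih Y hYX (fun y hy =>
        le_trans (card_le_card (filter_subset_filter _ sdiff_subset)) (h y (sdiff_subset hy)))
      have hxs : x ∉ s := fun hxs => hxY (hsY hxs)
      have hnoadj : ∀ y ∈ s, ¬ G.Adj x y := by
        intro y hy hadj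
        have hyY := hsY hy
        have : y ∈ R := by
          rw [hR]
          exact mem_insert_of_mem (mem_filter.2 ⟨sdiff_subset hyY, hadj⟩)
        simp [hYdef, this] at hyY
      refine ⟨insert x s, insert_subset hx (hsY.trans sdiff_subset), ?_, ?_⟩
      · intro a ha b hb hab hadj
        rcases mem_insert.1 ha with ha' | ha' <;> rcases mem_insert.1 hb with hb' | hb'
        · exact hab (ha'.trans hb'.symm)
        · exact hnoadj b hb' (ha' ▸ hadj)
        · exact hnoadj a ha' (hb' ▸ hadj.symm)
        · exact hind a ha' b hb' hab hadj
      · have h1 : X.card ≤ Y.card + R.card := by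
          have := Finset.card_le_card_sdiff_add_card (s := X) (t := R)
          rwa [← hYdef] at this
        have h2 : R.card ≤ 2 := by
          calc R.card ≤ (X.filter (fun y => G.Adj x y)).card + 1 := Finset.card_insert_le _ _
            _ ≤ 2 := by have := h x hx; omega
        rw [Finset.card_insert_of_notMem hxs]
        omega

section Herald

variable {V : Type} [Fintype V] [DecidableEq V] {nA : ℕ} {p : ℝ} {γ : V → ℝ}

lemma actProb_nonneg (hp : 0 ≤ p) (hp1 : p ≤ 1) {g : ℝ} (hg : 0 ≤ g) (hg2 : g ≤ 1/2) :
    ∀ a : Act nA, 0 ≤ actProb nA p g a := by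
  have hsum : ∑ i : Fin nA, g * (2:ℝ) ^ (-((i.1:ℤ)+1)) ≤ 1/2 := by
    rw [← Finset.mul_sum]
    calc g * ∑ i : Fin nA, (2:ℝ)^(-((i.1:ℤ)+1)) ≤ g * 1 :=
          mul_le_mul_of_nonneg_left (sum_q_le nA) hg
      _ ≤ 1/2 := by linarith
  rintro (_ | ⟨i, _ | _⟩) <;> simp only [actProb]
  · linarith
  · positivity
  · have h2 : (0:ℝ) ≤ 2 ^ (-((i.1:ℤ)+1)) := by positivity
    exact mul_nonneg (mul_nonneg (by linarith) hg) h2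

lemma actProb_none_pos (hp : 0 ≤ p) (hp1 : p ≤ 1) {g : ℝ} (hg : 0 ≤ g) (hg2 : g ≤ 1/2) :
    0 < actProb nA p g none := by
  have hsum : ∑ i : Fin nA, g * (2:ℝ) ^ (-((i.1:ℤ)+1)) ≤ 1/2 := by
    rw [← Finset.mul_sum]
    calc g * ∑ i : Fin nA, (2:ℝ)^(-((i.1:ℤ)+1)) ≤ g * 1 :=
          mul_le_mul_of_nonneg_left (sum_q_le nA) hg
      _ ≤ 1/2 := by linarith
  simp only [actProb]; linarith

variable (hγ : ∀ x, 0 ≤ γ x ∧ γ x ≤ 1/2) (hp : 0 < p) (hp2 : p ≤ 1/2)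

include hγ hp hp2 in
lemma prodP_nonneg (f : V → Act nA) : 0 ≤ ∏ v, actProb nA p (γ v) (f v) :=
  Finset.prod_nonneg fun v _ =>
    actProb_nonneg hp.le (by linarith) (hγ v).1 (hγ v).2 _

include hγ hp hp2 in
lemma roundPr_nonneg (E : (V → Act nA) → Prop) : 0 ≤ roundPr nA p γ E := by
  classical
  refine Finset.sum_nonneg fun f _ => ?_
  split_ifs
  · exact prodP_nonneg hγ hp hp2 f
  · exact le_refl 0

include hγ hp hp2 in
lemma roundPr_pos (E : (V → Act nA) → Prop) (hE : E (fun _ => none)) :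
    0 < roundPr nA p γ E := by
  classical
  have hterm : ∀ f : V → Act nA, 0 ≤ (if E f then ∏ v, actProb nA p (γ v) (f v) else 0) := by
    intro f; split_ifs
    · exact prodP_nonneg hγ hp hp2 f
    · exact le_refl 0
  have h0 : (0:ℝ) < (if E (fun _ => none) then ∏ v : V, actProb nA p (γ v) none else 0) := by
    rw [if_pos hE]
    exact Finset.prod_pos fun v _ => actProb_none_pos hp.le (by linarith) (hγ v).1 (hγ v).2
  calc (0:ℝ) < _ := h0
    _ ≤ roundPr nA p γ E := Finset.single_le_sum (fun f _ => hterm f) (Finset.mem_univ _)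

include hγ hp hp2 in
lemma roundPr_le_sum (T : Finset V) (E : (V → Act nA) → Prop)
    (Ex : V → (V → Act nA) → Prop) (h : ∀ f, E f → ∃ x ∈ T, Ex x f) :
    roundPr nA p γ E ≤ ∑ x ∈ T, roundPr nA p γ (Ex x) := by
  classical
  simp only [roundPr]
  conv_rhs => rw [Finset.sum_comm]
  refine Finset.sum_le_sum fun f _ => ?_
  by_cases hE : E f
  · rw [if_pos hE]
    obtain ⟨x, hxT, hEx⟩ := h f hE
    have h1 : ∀ y ∈ T, (0:ℝ) ≤ (if Ex y f then ∏ v, actProb nA p (γ v) (f v) else 0) := by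
      intro y _
      split_ifs
      · exact prodP_nonneg hγ hp hp2 f
      · exact le_refl 0
    have h2 := Finset.single_le_sum h1 hxT
    rwa [if_pos hEx] at h2
  · rw [if_neg hE]
    refine Finset.sum_nonneg fun y _ => ?_
    split_ifs
    · exact prodP_nonneg hγ hp hp2 f
    · exact le_refl 0

include hγ hp hp2 in
lemma roundPr_swap (x : V) (i : Fin nA) (C : (V → Act nA) → Prop)
    (hC : ∀ (f : V → Act nA) b, C (Function.update f x b) ↔ C f) :
    roundPr nA p γ (fun f => C f ∧ f x = some (i, false)) =
      p / (1 - p) * roundPr nA p γ (fun f => C f ∧ f x = some (i, true)) := by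
  classical
  have hp1 : p < 1 := by linarith
  have hne : (1 : ℝ) - p ≠ 0 := by linarith
  set L : Act nA := some (i, false) with hL
  set B : Act nA := some (i, true) with hB
  set σ : Act nA ≃ Act nA := Equiv.swap L B with hσ
  set e : (V → Act nA) → (V → Act nA) := fun f => Function.update f x (σ (f x)) with he
  have hinv : Function.Involutive e := by
    intro f
    simp only [he, Function.update_idem, Function.update_self]
    rw [Equiv.swap_apply_self, Function.update_eq_self]
  have hefx : ∀ f : V → Act nA, e f x = σ (f x) := fun f => Function.update_self _ _ _
  have heupd : ∀ f : V → Act nA, e f = Function.update f x (σ (f x)) := fun _ => rfl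
  simp only [roundPr]
  rw [Finset.mul_sum]
  refine Fintype.sum_bijective e hinv.bijective _ _ fun f => ?_
  by_cases hfx : f x = L
  · have hCe : C (e f) ↔ C f := by rw [heupd]; exact hC f _
    have hefxB : e f x = B := by rw [hefx, hfx, hσ, Equiv.swap_apply_left]
    by_cases hCf : C f
    · rw [if_pos ⟨hCf, hfx⟩, if_pos ⟨hCe.2 hCf, hefxB⟩]
      have e1 : ∏ v, actProb nA p (γ v) (f v)
          = actProb nA p (γ x) (f x) * ∏ v ∈ Finset.univ.erase x, actProb nA p (γ v) (f v) :=
        (Finset.mul_prod_erase Finset.univ _ (Finset.mem_univ x)).symm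
      have e2 : ∏ v, actProb nA p (γ v) (e f v)
          = actProb nA p (γ x) B * ∏ v ∈ Finset.univ.erase x, actProb nA p (γ v) (f v) := by
        rw [← Finset.mul_prod_erase Finset.univ _ (Finset.mem_univ x), hefxB]
        congr 1
        refine Finset.prod_congr rfl fun v hv => ?_
        rw [heupd, Function.update_of_ne (Finset.mem_erase.1 hv).1]
      rw [e1, e2, hfx, hL, hB]
      simp only [actProb]
      field_simp
      ring
    · rw [if_neg (fun h => hCf h.1), if_neg (fun h => hCf (hCe.1 h.1)), mul_zero]
  · have hefxnB : ¬ (e f x = B) := by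
      rw [hefx]
      intro h
      apply hfx
      have := congrArg σ.symm h
      rwa [Equiv.symm_apply_apply, hσ, Equiv.symm_swap, Equiv.swap_apply_right] at this
    rw [if_neg (fun h => hfx h.2), if_neg (fun h => hefxnB h.2), mul_zero]

end Herald

lemma le_indepNumOn {V : Type} [Fintype V] (G : SimpleGraph V) (A : Set V) (s : Finset V)
    (hs : ↑s ⊆ A) (hind : ∀ a ∈ s, ∀ b ∈ s, a ≠ b → ¬ G.Adj a b) :
    s.card ≤ indepNumOn G A := by
  unfold indepNumOn
  apply le_csSup
  · exact ⟨Fintype.card V, by rintro n ⟨t, -, -, rfl⟩; exact t.card_le_univ⟩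
  · exact ⟨s, hs, hind, rfl⟩

/-- There is an absolute constant `c > 0` such that in the herald-protocol round model, for
every vertex `u`, every `k ≥ 1`, every channel `i` and every `S ⊆ N^k(u)`, with
`∂S = {s ∈ S : s has a neighbor in N^k(u) \ S}`: the event that no vertex of `∂S` operates
on channel `i` has positive probability, and conditioned on it, the probability that some
vertex of `N^k(u) \ S` receives a message on channel `i` is at most
`c · π_ℓ · α(G[N^k(u)])`. -/
theorem stmt_15 : ∃ c : ℝ, 0 < c ∧
    ∀ (V : Type) [Fintype V] [DecidableEq V] (G : SimpleGraph V) [DecidableRel G.Adj]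
      (nA : ℕ), 1 ≤ nA →
      ∀ pl : ℝ, 0 < pl → pl ≤ 1 / 2 →
      ∀ γ : V → ℝ, (∀ x, 0 ≤ γ x ∧ γ x ≤ 1 / 2) →
      ∀ (u : V) (k : ℕ), 1 ≤ k →
      ∀ (i : Fin nA) (S : Set V), S ⊆ ball G u k →
      0 < roundPr nA pl γ (fun f =>
        ∀ s ∈ S, (∃ x, x ∈ ball G u k ∧ x ∉ S ∧ G.Adj s x) → ¬ operates f s i) ∧
      roundPr nA pl γ (fun f =>
            (∀ s ∈ S, (∃ x, x ∈ ball G u k ∧ x ∉ S ∧ G.Adj s x) → ¬ operates f s i) ∧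
            ∃ x, x ∈ ball G u k ∧ x ∉ S ∧ receivesOn G f x i) /
          roundPr nA pl γ (fun f =>
            ∀ s ∈ S, (∃ x, x ∈ ball G u k ∧ x ∉ S ∧ G.Adj s x) → ¬ operates f s i) ≤
        c * pl * (indepNumOn G (ball G u k) : ℝ) := by
  classical
  refine ⟨4, by norm_num, ?_⟩
  intro V _ _ G _ nA hnA pl hpl hpl2 γ hγ u k hk i S hS
  classical
  set bnd : (V → Act nA) → Prop := fun f =>
    ∀ s ∈ S, (∃ x, x ∈ ball G u k ∧ x ∉ S ∧ G.Adj s x) → ¬ operates f s i with hbnd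
  have hD : 0 < roundPr nA pl γ bnd := by
    refine roundPr_pos hγ hpl hpl2 _ ?_
    intro s hs _ hop
    rcases hop with h | h <;> simp [listens, broadcasts] at h
  refine ⟨hD, ?_⟩
  rw [div_le_iff₀ hD]
  set α : ℝ := (indepNumOn G (ball G u k) : ℝ) with hα
  have hα0 : 0 ≤ α := Nat.cast_nonneg _
  set T : Finset V := Finset.univ.filter (fun x => x ∈ ball G u k ∧ x ∉ S) with hT
  set E1 : V → (V → Act nA) → Prop := fun x f =>
    ((G.neighborFinset x).filter fun w => broadcasts f w i).card = 1 with hE1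
  -- Step A : union bound
  have stepA : roundPr nA pl γ (fun f => bnd f ∧ ∃ x, x ∈ ball G u k ∧ x ∉ S ∧ receivesOn G f x i)
      ≤ ∑ x ∈ T, roundPr nA pl γ (fun f => (bnd f ∧ E1 x f) ∧ f x = some (i, false)) := by
    refine roundPr_le_sum hγ hpl hpl2 T _ _ ?_
    rintro f ⟨hb, x, hxB, hxS, hrecv⟩
    exact ⟨x, Finset.mem_filter.2 ⟨Finset.mem_univ _, hxB, hxS⟩, ⟨hb, hrecv.2⟩, hrecv.1⟩
  -- Step B : swap listen to broadcast
  have stepB : ∀ x ∈ T,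
      roundPr nA pl γ (fun f => (bnd f ∧ E1 x f) ∧ f x = some (i, false)) =
        pl / (1 - pl) * roundPr nA pl γ (fun f => (bnd f ∧ E1 x f) ∧ f x = some (i, true)) := by
    intro x hxT
    obtain ⟨-, hxB, hxS⟩ := Finset.mem_filter.1 hxT
    refine roundPr_swap hγ hpl hpl2 x i _ ?_
    intro f b
    have hbnd_inv : bnd (Function.update f x b) ↔ bnd f := by
      rw [hbnd]
      refine forall₂_congr fun s hs => imp_congr Iff.rfl (not_congr ?_)
      have hsx : s ≠ x := fun h => hxS (h ▸ hs)
      simp [operates, listens, broadcasts, Function.update_of_ne hsx]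
    have hE1_inv : E1 x (Function.update f x b) ↔ E1 x f := by
      rw [hE1]
      have hfilt : ((G.neighborFinset x).filter fun w => broadcasts (Function.update f x b) w i)
          = ((G.neighborFinset x).filter fun w => broadcasts f w i) := by
        refine Finset.filter_congr fun w hw => ?_
        have hadjxw : G.Adj x w := by simpa using hw
        have hwx : w ≠ x := hadjxw.ne'
        simp [broadcasts, Function.update_of_ne hwx]
      simp only [hfilt]
    exact and_congr hbnd_inv hE1_inv
  -- Step C : counting broadcasters with a unique broadcasting neighbour
  have stepC : ∑ x ∈ T, roundPr nA pl γ (fun f => (bnd f ∧ E1 x f) ∧ f x = some (i, true))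
      ≤ 2 * α * roundPr nA pl γ bnd := by
    simp only [roundPr]
    rw [Finset.sum_comm, Finset.mul_sum]
    refine Finset.sum_le_sum fun f _ => ?_
    by_cases hb : bnd f
    · rw [if_pos hb]
      set pr : ℝ := ∏ v, actProb nA pl (γ v) (f v) with hpr
      have hpr0 : 0 ≤ pr := prodP_nonneg hγ hpl hpl2 f
      -- generic counting bound
      have hcount : ∀ X : Finset V,
          (∀ x ∈ X, x ∈ ball G u k ∧ E1 x f ∧ f x = some (i, true)) →
          X.card ≤ 2 * indepNumOn G (ball G u k) := by
        intro X hmem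
        obtain ⟨s, hsX, hind, hc⟩ := exists_indep_half G X (by
          intro y hy
          obtain ⟨-, hyE1, -⟩ := hmem y hy
          have hsub : X.filter (fun z => G.Adj y z) ⊆
              (G.neighborFinset y).filter (fun w => broadcasts f w i) := by
            intro z hz
            obtain ⟨hzX, hzadj⟩ := Finset.mem_filter.1 hz
            refine Finset.mem_filter.2 ⟨by simpa using hzadj, ?_⟩
            exact (hmem z hzX).2.2
          calc (X.filter (fun z => G.Adj y z)).card
              ≤ ((G.neighborFinset y).filter (fun w => broadcasts f w i)).card :=
                Finset.card_le_card hsub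
            _ = 1 := hyE1)
        have hs1 : s.card ≤ indepNumOn G (ball G u k) :=
          le_indepNumOn G _ s (fun y hy => (hmem y (hsX hy)).1) hind
        omega
      have hvanish : ∀ x ∈ T,
          (if E1 x f ∧ f x = some (i, true) then pr else 0) ≠ 0 →
          (E1 x f ∧ f x = some (i, true)) := by
        intro x _ h0
        by_cases hc : E1 x f ∧ f x = some (i, true)
        · exact hc
        · exact absurd (if_neg hc) h0
      apply le_trans (b := ∑ x ∈ T, (if E1 x f ∧ f x = some (i, true) then pr else 0))
      · refine Finset.sum_le_sum fun x _ => ?_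
        split_ifs with h1 h2 h2
        · exact le_refl pr
        · exact absurd ⟨h1.1.2, h1.2⟩ h2
        · exact hpr0
        · exact le_refl 0
      have hfe := Finset.sum_filter_of_ne (s := T)
        (f := fun x => if E1 x f ∧ f x = some (i, true) then pr else 0)
        (p := fun x => E1 x f ∧ f x = some (i, true)) hvanish
      rw [← hfe]
      refine le_trans (Finset.sum_le_card_nsmul _ _ pr ?_) ?_
      · intro x _
        split_ifs
        · exact le_refl pr
        · exact hpr0
      · rw [nsmul_eq_mul]
        refine le_trans (mul_le_mul_of_nonneg_right ?_ hpr0) (le_of_eq rfl)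
        have hXc := hcount
          (Finset.filter (fun x => E1 x f ∧ f x = some (i, true)) T) (fun x hx => by
          obtain ⟨hxT, hxc⟩ := Finset.mem_filter.1 hx
          rw [hT] at hxT
          exact ⟨(Finset.mem_filter.1 hxT).2.1, hxc⟩)
        rw [hα]
        exact_mod_cast hXc
    · rw [if_neg hb, mul_zero]
      exact le_of_eq (Finset.sum_eq_zero fun x _ => if_neg (fun h => hb h.1.1))
  -- assemble
  have hfrac : pl / (1 - pl) ≤ 2 * pl := by
    rw [div_le_iff₀ (by linarith)]
    nlinarith
  have h2αD : 0 ≤ 2 * α * roundPr nA pl γ bnd := by positivity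
  calc roundPr nA pl γ (fun f => bnd f ∧ ∃ x, x ∈ ball G u k ∧ x ∉ S ∧ receivesOn G f x i)
      ≤ ∑ x ∈ T, roundPr nA pl γ (fun f => (bnd f ∧ E1 x f) ∧ f x = some (i, false)) := stepA
    _ = ∑ x ∈ T, pl / (1 - pl) *
          roundPr nA pl γ (fun f => (bnd f ∧ E1 x f) ∧ f x = some (i, true)) :=
        Finset.sum_congr rfl stepB
    _ = pl / (1 - pl) * ∑ x ∈ T,
          roundPr nA pl γ (fun f => (bnd f ∧ E1 x f) ∧ f x = some (i, true)) :=
        (Finset.mul_sum _ _ _).symm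
    _ ≤ pl / (1 - pl) * (2 * α * roundPr nA pl γ bnd) := by
        exact mul_le_mul_of_nonneg_left stepC (div_nonneg hpl.le (by linarith))
    _ ≤ 2 * pl * (2 * α * roundPr nA pl γ bnd) := mul_le_mul_of_nonneg_right hfrac h2αD
    _ = 4 * pl * α * roundPr nA pl γ bnd := by ring
end

section
/- In the herald-protocol round model, let u be a vertex with Γ(u) ≥ 1, let v and w be two distinct adjacent vertices with v, w ∈ N(u) ∪ {u}, and set λ := max(1, ⌈log₂ Γ(u)⌉); assume λ ≤ n_A. Then the probability that both v and w operate on channel λ while no other vertex of N(v) ∪ N(w) operates on channel λ is at least (1/4) · 4^{−(Γ(v)+Γ(w))/Γ(u)} · γ(v) · γ(w) / Γ(u)². -/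
open Finset

/-!
Since the vertices act independently, the event factorises over the vertices: `v` and `w`
operate on channel `λ` with probabilities `γ(v) 2^{-λ}` and `γ(w) 2^{-λ}`, and every other
vertex `x` of `N(v) ∪ N(w)` stays off channel `λ` with probability `1 - γ(x) 2^{-λ}`. The
choice of `λ` gives `1/(2Γ(u)) ≤ 2^{-λ} ≤ 1/Γ(u)`, and `1 - t ≥ 4^{-t}` on `[0, 1/2]` bounds
the product from below by `4^{-2^{-λ} Σ γ(x)} ≥ 4^{-(Γ(v)+Γ(w))/Γ(u)}`.
-/

lemma Fin.val_add_one_eq_iff {n m : ℕ} {i j : Fin n} (hj : j.1 + 1 = m) : i.1 + 1 = m ↔ i = j :=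
  ⟨fun hi => Fin.ext (by omega), fun h => h ▸ hj⟩

namespace Act

variable {nA : ℕ}

def channel (a : Act nA) : Option (Fin nA) := a.map Prod.fst

lemma operates_iff_channel {V : Type*} (f : V → Act nA) (x : V) (i : Fin nA) :
    operates f x i ↔ channel (f x) = some i := by
  rcases hf : f x with _ | ⟨k, _ | _⟩ <;> simp [operates, listens, broadcasts, channel, hf, eq_comm]

end Act

open Act

section RoundModel

variable {nA : ℕ}

lemma sum_actProb (p g : ℝ) : ∑ a : Act nA, actProb nA p g a = 1 := by
  simp only [Fintype.sum_option, Fintype.sum_prod_type, Fintype.sum_bool, actProb, ← add_mul,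
    sub_add_cancel, one_mul]

lemma sum_actProb_channel_eq (p g : ℝ) (j : Fin nA) :
    ∑ a with channel a = some j, actProb nA p g a = g * 2 ^ (-((j.1 : ℤ) + 1)) := by
  have : ({a | channel a = some j} : Finset (Act nA)) = {some (j, true), some (j, false)} := by
    ext (_ | ⟨i, _ | _⟩) <;> simp [channel, eq_comm]
  rw [this, sum_pair (by simp), actProb, actProb]
  ring

lemma sum_actProb_channel_ne (p g : ℝ) (j : Fin nA) :
    ∑ a with channel a ≠ some j, actProb nA p g a = 1 - g * 2 ^ (-((j.1 : ℤ) + 1)) := by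
  rw [← sum_actProb p g, ← sum_actProb_channel_eq p g j]
  exact eq_sub_of_add_eq' (Finset.sum_filter_add_sum_filter_not univ _ _)

variable {V : Type*} [Fintype V] [DecidableEq V] (p : ℝ) (γ : V → ℝ)

lemma roundPr_congr {E E' : (V → Act nA) → Prop} (h : ∀ f, E f ↔ E' f) :
    roundPr nA p γ E = roundPr nA p γ E' := by
  rw [funext fun f => propext (h f)]

lemma roundPr_forall_mem (s : V → Finset (Act nA)) :
    roundPr nA p γ (fun f => ∀ x, f x ∈ s x) = ∏ x, ∑ a ∈ s x, actProb nA p (γ x) a := by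
  have : Fintype.piFinset s = univ.filter fun f : V → Act nA => ∀ x, f x ∈ s x := by ext; simp
  rw [Finset.prod_univ_sum, this, Finset.sum_filter, roundPr]
  congr! 2

lemma roundPr_operates_and_silent (B C : Finset V) (hBC : Disjoint B C) (j : Fin nA) :
    roundPr nA p γ (fun f => (∀ x ∈ B, operates f x j) ∧ ∀ x ∈ C, ¬ operates f x j) =
      (∏ x ∈ B, γ x * 2 ^ (-((j.1 : ℤ) + 1))) * ∏ x ∈ C, (1 - γ x * 2 ^ (-((j.1 : ℤ) + 1))) := by
  set A : ℝ := 2 ^ (-((j.1 : ℤ) + 1))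
  let s : V → Finset (Act nA) := fun x =>
    if x ∈ B then univ.filter (channel · = some j)
    else if x ∈ C then univ.filter (channel · ≠ some j) else univ
  have hs : ∀ f : V → Act nA,
      ((∀ x ∈ B, operates f x j) ∧ ∀ x ∈ C, ¬ operates f x j) ↔ ∀ x, f x ∈ s x := by
    intro f
    simp only [operates_iff_channel]
    constructor
    · rintro ⟨hB, hC⟩ x
      by_cases hxB : x ∈ B
      · simpa [s, hxB] using hB x hxB
      by_cases hxC : x ∈ C
      · simpa [s, hxB, hxC] using hC x hxC
      · simp [s, hxB, hxC]
    · intro h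
      exact ⟨fun x hx => by simpa [s, hx] using h x,
        fun x hx => by simpa [s, hx, disjoint_right.1 hBC hx] using h x⟩
  calc _ = ∏ x, ∑ a ∈ s x, actProb nA p (γ x) a := by
          rw [roundPr_congr p γ hs, roundPr_forall_mem]
    _ = ∏ x, if x ∈ B then γ x * A else if x ∈ C then 1 - γ x * A else 1 := by
          refine Finset.prod_congr rfl fun x _ => ?_
          split_ifs with hxB hxC
          · simpa only [s, if_pos hxB] using sum_actProb_channel_eq p (γ x) j
          · simpa only [s, if_neg hxB, if_pos hxC] using sum_actProb_channel_ne p (γ x) j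
          · simpa only [s, if_neg hxB, if_neg hxC] using sum_actProb p (γ x)
    _ = _ := by
          rw [Finset.prod_ite, Finset.filter_mem_eq_inter, univ_inter, Finset.prod_ite_mem,
            Finset.inter_eq_right.2 fun x hx => by simp [disjoint_right.1 hBC hx]]

lemma roundPr_pair_operates_and_silent {v w : V} (hvw : v ≠ w) (U : Finset V) (j : Fin nA) :
    roundPr nA p γ (fun f =>
        operates f v j ∧ operates f w j ∧ ∀ x ∈ U, x ≠ v → x ≠ w → ¬ operates f x j) =
      γ v * 2 ^ (-((j.1 : ℤ) + 1)) * (γ w * 2 ^ (-((j.1 : ℤ) + 1))) *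
        ∏ x ∈ U \ {v, w}, (1 - γ x * 2 ^ (-((j.1 : ℤ) + 1))) := by
  have h := roundPr_operates_and_silent p γ {v, w} (U \ {v, w}) disjoint_sdiff j
  rw [prod_pair hvw] at h
  refine (roundPr_congr p γ fun f => ?_).trans h
  simp only [mem_sdiff, mem_insert, mem_singleton, or_imp, forall_and, forall_eq, not_or, and_imp]
  tauto

end RoundModel

lemma le_two_pow_max_one_ceil_logb {x : ℝ} (hx : 0 < x) :
    x ≤ 2 ^ max 1 ⌈Real.logb 2 x⌉₊ := by
  rw [← Real.rpow_natCast, ← Real.logb_le_iff_le_rpow (by norm_num) hx]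
  exact (Nat.le_ceil _).trans (by exact_mod_cast le_max_right _ _)

lemma two_pow_max_one_ceil_logb_le {x : ℝ} (hx : 1 ≤ x) :
    (2 : ℝ) ^ max 1 ⌈Real.logb 2 x⌉₊ ≤ 2 * x := by
  have hlog : 0 ≤ Real.logb 2 x := Real.logb_nonneg (by norm_num) hx
  rw [← Real.rpow_natCast, ← Real.le_logb_iff_rpow_le (by norm_num) (by positivity),
    Real.logb_mul (by norm_num) (by positivity), Real.logb_self_eq_one (by norm_num)]
  push_cast
  exact max_le (by linarith) ((Nat.ceil_lt_add_one hlog).le.trans (by linarith))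

lemma four_rpow_neg_le_one_sub {t : ℝ} (h0 : 0 ≤ t) (h1 : t ≤ 1 / 2) :
    (4 : ℝ) ^ (-t) ≤ 1 - t := by
  -- Bernoulli's inequality `(1 + s)^q ≤ 1 + q s` with `s = -1/2` and `q = 2t ∈ [0, 1]`.
  have h := rpow_one_add_le_one_add_mul_self (s := -1 / 2) (by norm_num)
    (p := 2 * t) (by linarith) (by linarith)
  have h4 : (4 : ℝ) ^ (-t) = (1 + -1 / 2) ^ (2 * t) := by
    rw [Real.rpow_mul (by norm_num), Real.rpow_neg (by norm_num), ← Real.inv_rpow (by norm_num)]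
    norm_num
  linarith

lemma four_rpow_neg_sum_le_prod_one_sub {ι : Type*} (s : Finset ι) (t : ι → ℝ)
    (ht : ∀ i ∈ s, 0 ≤ t i ∧ t i ≤ 1 / 2) :
    (4 : ℝ) ^ (-∑ i ∈ s, t i) ≤ ∏ i ∈ s, (1 - t i) := by
  rw [← Finset.sum_neg_distrib, Real.rpow_sum_of_pos (by norm_num)]
  exact Finset.prod_le_prod (fun i _ => by positivity)
    fun i hi => four_rpow_neg_le_one_sub (ht i hi).1 (ht i hi).2

lemma four_rpow_neg_le_prod_one_sub_mul {ι : Type*} (s : Finset ι) (g : ι → ℝ)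
    (hg : ∀ i ∈ s, 0 ≤ g i ∧ g i ≤ 1 / 2) {A c : ℝ} (hA0 : 0 ≤ A) (hA1 : A ≤ 1)
    (hc : A * ∑ i ∈ s, g i ≤ c) :
    (4 : ℝ) ^ (-c) ≤ ∏ i ∈ s, (1 - g i * A) := by
  refine (Real.rpow_le_rpow_of_exponent_le (by norm_num) ?_).trans
    (four_rpow_neg_sum_le_prod_one_sub s (fun i => g i * A) fun i hi => ⟨?_, ?_⟩)
  · rw [← Finset.sum_mul, mul_comm]
    exact neg_le_neg hc
  · exact mul_nonneg (hg i hi).1 hA0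
  · nlinarith [(hg i hi).1, (hg i hi).2]

lemma sum_le_Gam_add_Gam {V : Type*} [Fintype V] [DecidableEq V] (G : SimpleGraph V)
    [DecidableRel G.Adj] {γ : V → ℝ} (hγ : ∀ x, 0 ≤ γ x) {v w : V} {s : Finset V}
    (hs : s ⊆ G.neighborFinset v ∪ G.neighborFinset w) :
    ∑ x ∈ s, γ x ≤ Gam G γ v + Gam G γ w := by
  have hsub : s ⊆ insert v (G.neighborFinset v) ∪ insert w (G.neighborFinset w) :=
    hs.trans (union_subset_union (subset_insert _ _) (subset_insert _ _))
  calc ∑ x ∈ s, γ x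
      ≤ ∑ x ∈ insert v (G.neighborFinset v) ∪ insert w (G.neighborFinset w), γ x :=
        sum_le_sum_of_subset_of_nonneg hsub fun x _ _ => hγ x
    _ ≤ Gam G γ v + Gam G γ w := by
        rw [Gam, Gam, ← sum_union_inter]
        exact le_add_of_nonneg_right (sum_nonneg fun x _ => hγ x)

theorem stmt_18_general {V : Type*} [Fintype V] [DecidableEq V] (G : SimpleGraph V)
    [DecidableRel G.Adj] (nA : ℕ)
    (pl : ℝ)
    (γ : V → ℝ) (hγ : ∀ x, 0 ≤ γ x ∧ γ x ≤ 1 / 2)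
    (u v w : V) (hvw : v ≠ w)
    (hΓ : 1 ≤ Gam G γ u)
    (lam : ℕ) (hlam : lam = max 1 ⌈Real.logb 2 (Gam G γ u)⌉₊) (hlamnA : lam ≤ nA) :
    1 / 4 * (4 : ℝ) ^ (-((Gam G γ v + Gam G γ w) / Gam G γ u)) * γ v * γ w /
        (Gam G γ u) ^ 2 ≤
      roundPr nA pl γ (fun f =>
        (∃ i : Fin nA, (i.1 : ℕ) + 1 = lam ∧ operates f v i) ∧
        (∃ i : Fin nA, (i.1 : ℕ) + 1 = lam ∧ operates f w i) ∧
        (∀ x ∈ G.neighborFinset v ∪ G.neighborFinset w, x ≠ v → x ≠ w →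
          ∀ i : Fin nA, (i.1 : ℕ) + 1 = lam → ¬ operates f x i)) := by
  let j : Fin nA := ⟨lam - 1, by omega⟩
  have hj : j.1 + 1 = lam := Nat.sub_add_cancel (hlam ▸ le_max_left _ _)
  have hA : (2 : ℝ) ^ (-((j.1 : ℤ) + 1)) = ((2 : ℝ) ^ lam)⁻¹ := by
    rw [zpow_neg, ← hj]; norm_cast
  simp only [Fin.val_add_one_eq_iff hj, exists_eq_left, forall_eq]
  rw [roundPr_pair_operates_and_silent pl γ hvw, hA]
  set A := ((2 : ℝ) ^ lam)⁻¹
  set Γu := Gam G γ u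
  have hΓu : 0 < Γu := by linarith
  have hA_le : A ≤ 1 / Γu := by
    rw [one_div]; exact inv_anti₀ hΓu (hlam ▸ le_two_pow_max_one_ceil_logb hΓu)
  have hA_ge : 1 / (2 * Γu) ≤ A := by
    rw [one_div]; exact inv_anti₀ (by positivity) (hlam ▸ two_pow_max_one_ceil_logb_le hΓ)
  have hsum : A * ∑ x ∈ (G.neighborFinset v ∪ G.neighborFinset w) \ {v, w}, γ x ≤
      (Gam G γ v + Gam G γ w) / Γu :=
    (mul_le_mul hA_le (sum_le_Gam_add_Gam G (fun x => (hγ x).1) sdiff_subset)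
      (sum_nonneg fun x _ => (hγ x).1) (by positivity)).trans_eq (one_div_mul_eq_div _ _)
  have hprod := four_rpow_neg_le_prod_one_sub_mul _ γ (fun x _ => hγ x) (by positivity)
    (hA_le.trans ((div_le_one hΓu).2 hΓ)) hsum
  have := (hγ v).1
  have := (hγ w).1
  calc _ = γ v * γ w * (1 / (2 * Γu)) ^ 2 * (4 : ℝ) ^ (-((Gam G γ v + Gam G γ w) / Γu)) := by
        field_simp; ring
    _ ≤ γ v * γ w * A ^ 2 * ∏ x ∈ _, (1 - γ x * A) := by gcongr
    _ = _ := by ring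

/-- In the herald-protocol round model, if `Γ(u) ≥ 1`, `v` and `w` are distinct adjacent
vertices of the closed neighborhood of `u`, and `λ = max(1, ⌈log₂ Γ(u)⌉) ≤ n_A`, then the
probability that both `v` and `w` operate on channel `λ` while no other vertex of
`N(v) ∪ N(w)` operates on channel `λ` is at least
`(1/4) · 4^{−(Γ(v)+Γ(w))/Γ(u)} · γ(v) · γ(w) / Γ(u)²`.
(A channel index `i : Fin nA` corresponds to channel number `i + 1`.) -/
theorem stmt_18 {V : Type*} [Fintype V] [DecidableEq V] (G : SimpleGraph V)
    [DecidableRel G.Adj] (nA : ℕ) (hnA : 1 ≤ nA)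
    (pl : ℝ) (hpl0 : 0 < pl) (hpl1 : pl ≤ 1 / 2)
    (γ : V → ℝ) (hγ : ∀ x, 0 ≤ γ x ∧ γ x ≤ 1 / 2)
    (u v w : V) (hvw : v ≠ w) (hadj : G.Adj v w)
    (hv : v ∈ insert u (G.neighborFinset u)) (hw : w ∈ insert u (G.neighborFinset u))
    (hΓ : 1 ≤ Gam G γ u)
    (lam : ℕ) (hlam : lam = max 1 ⌈Real.logb 2 (Gam G γ u)⌉₊) (hlamnA : lam ≤ nA) :
    1 / 4 * (4 : ℝ) ^ (-((Gam G γ v + Gam G γ w) / Gam G γ u)) * γ v * γ w /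
        (Gam G γ u) ^ 2 ≤
      roundPr nA pl γ (fun f =>
        (∃ i : Fin nA, (i.1 : ℕ) + 1 = lam ∧ operates f v i) ∧
        (∃ i : Fin nA, (i.1 : ℕ) + 1 = lam ∧ operates f w i) ∧
        (∀ x ∈ G.neighborFinset v ∪ G.neighborFinset w, x ≠ v → x ≠ w →
          ∀ i : Fin nA, (i.1 : ℕ) + 1 = lam → ¬ operates f x i)) :=
  stmt_18_general G nA pl γ hγ u v w hvw hΓ lam hlam hlamnA
end
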